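/- arXiv:1610.01907 — 4 statements merged into one kernel-verified Lean document; each statement's English description precedes it below -/
import Mathlib

section
/- Let b : ℝ → ℝ be defined by b(p) = (4 p² f² + 2 p f)/(3 p² f² + 3) for a fixed parameter f with 0 < f ≤ 1 satisfying 4 - 9/f² + 6/f ≥ 0. Then p∞ = 2/3 + (1/3)·√(4 - 9/f² + 6/f) is a fixed point of b, i.e. b(p∞) = p∞. -/
/-!
Clearing the (positive) denominator, `b p = p` holds as soon as `p` is a root of
`3 f² p² - 4 f² p + (3 - 2 f)`, and `p∞` is the larger root of this quadratic: its discriminant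
is `(2 f² √(4 - 9/f² + 6/f))²`.
-/

noncomputable def bbpsswMap (f p : ℝ) : ℝ :=
  (4 * p ^ 2 * f ^ 2 + 2 * p * f) / (3 * p ^ 2 * f ^ 2 + 3)

theorem bbpsswMap_eq_self_of_quadratic {f p : ℝ}
    (hp : 3 * f ^ 2 * p ^ 2 - 4 * f ^ 2 * p + (3 - 2 * f) = 0) : bbpsswMap f p = p := by
  rw [bbpsswMap, div_eq_iff (by positivity)]
  linear_combination (-p) * hp

theorem bbpssw_quadratic_of_sq_eq {f s : ℝ} (hf : f ≠ 0) (hs : s ^ 2 = 4 - 9 / f ^ 2 + 6 / f) :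
    3 * f ^ 2 * (2 / 3 + 1 / 3 * s) ^ 2 - 4 * f ^ 2 * (2 / 3 + 1 / 3 * s) + (3 - 2 * f) = 0 := by
  have hfs : f ^ 2 * s ^ 2 = 4 * f ^ 2 - 9 + 6 * f := by
    rw [hs]
    field_simp
  linear_combination (1 / 3) * hfs

theorem bbpssw_fixed_point_general (f : ℝ) (hf0 : 0 < f)
    (hdisc : 0 ≤ 4 - 9 / f ^ 2 + 6 / f) :
    let b : ℝ → ℝ := fun p => (4 * p ^ 2 * f ^ 2 + 2 * p * f) / (3 * p ^ 2 * f ^ 2 + 3)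
    let pinf : ℝ := 2 / 3 + (1 / 3) * Real.sqrt (4 - 9 / f ^ 2 + 6 / f)
    b pinf = pinf :=
  bbpsswMap_eq_self_of_quadratic (bbpssw_quadratic_of_sq_eq hf0.ne' (Real.sq_sqrt hdisc))

theorem bbpssw_fixed_point (f : ℝ) (hf0 : 0 < f) (hf1 : f ≤ 1)
    (hdisc : 0 ≤ 4 - 9 / f ^ 2 + 6 / f) :
    let b : ℝ → ℝ := fun p => (4 * p ^ 2 * f ^ 2 + 2 * p * f) / (3 * p ^ 2 * f ^ 2 + 3)
    let pinf : ℝ := 2 / 3 + (1 / 3) * Real.sqrt (4 - 9 / f ^ 2 + 6 / f)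
    b pinf = pinf :=
  bbpssw_fixed_point_general f hf0 hdisc
end

section
/- Fix 0.78 ≤ f₀ ≤ 1 with 4f₀ - 3 ≥ 0 and f₀ ≠ 1/2. Define p∞ = (1/2 + √(4f₀-3)/(4f₀-2), 0, 0, 1/2 - √(4f₀-3)/(4f₀-2)). Then p∞ is a fixed point of the map sending (p₀₀,p₀₁,p₁₀,p₁₁) to (1/N)·(f₀²(p₀₀²+2p₀₀p₀₁)+f₁²(p₁₁²+2p₁₀p₁₁)+2f₀f₁(p₁₁p₀₀+p₁₀p₀₀+p₁₁p₀₁), f₀²p₀₁²+2f₀f₁p₁₀p₀₁+f₁²p₁₀², f₀²(p₁₀²+2p₁₀p₁₁)+f₁²(p₀₁²+2p₀₀p₀₁)+2f₀f₁(p₀₁p₁₀+p₀₀p₁₀+p₀₁p₁₁), f₀²p₁₁²+2f₀f₁p₀₀p₁₁+f₁²p₀₀²), where f₁ = 1-f₀ and N = (f₀²+f₁²)((p₀₀+p₀₁)²+(p₁₀+p₁₁)²)+4f₀f₁(p₀₀+p₀₁)(p₁₀+p₁₁). -/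
/-! On a binary pair `(a, 0, 0, b)` the map becomes `(x², 0, 0, y²) / (x² + y²)` with
`x = f₀ a + f₁ b` and `y = f₀ b + f₁ a`, so if `a + b = 1` the pair is fixed
as soon as `x² = c a` and `y² = c b` for one constant `c`. For `a, b = 1/2 ± s / (4 f₀ - 2)`
one finds `x, y = (1 ± s) / 2`, and `s² = 4 f₀ - 3` turns `x²` and `y²` into
`(2 f₀ - 1) a` and `(2 f₀ - 1) b`. -/

namespace DEJMPS

noncomputable def step (f₀ : ℝ) (p : ℝ × ℝ × ℝ × ℝ) : ℝ × ℝ × ℝ × ℝ :=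
  let f₁ := 1 - f₀
  let p₀₀ := p.1
  let p₀₁ := p.2.1
  let p₁₀ := p.2.2.1
  let p₁₁ := p.2.2.2
  let N := (f₀ ^ 2 + f₁ ^ 2) * ((p₀₀ + p₀₁) ^ 2 + (p₁₀ + p₁₁) ^ 2)
    + 4 * f₀ * f₁ * (p₀₀ + p₀₁) * (p₁₀ + p₁₁)
  ((1 / N) * (f₀ ^ 2 * (p₀₀ ^ 2 + 2 * p₀₀ * p₀₁) + f₁ ^ 2 * (p₁₁ ^ 2 + 2 * p₁₀ * p₁₁)
      + 2 * f₀ * f₁ * (p₁₁ * p₀₀ + p₁₀ * p₀₀ + p₁₁ * p₀₁)),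
    (1 / N) * (f₀ ^ 2 * p₀₁ ^ 2 + 2 * f₀ * f₁ * p₁₀ * p₀₁ + f₁ ^ 2 * p₁₀ ^ 2),
    (1 / N) * (f₀ ^ 2 * (p₁₀ ^ 2 + 2 * p₁₀ * p₁₁) + f₁ ^ 2 * (p₀₁ ^ 2 + 2 * p₀₀ * p₀₁)
      + 2 * f₀ * f₁ * (p₀₁ * p₁₀ + p₀₀ * p₁₀ + p₀₁ * p₁₁)),
    (1 / N) * (f₀ ^ 2 * p₁₁ ^ 2 + 2 * f₀ * f₁ * p₀₀ * p₁₁ + f₁ ^ 2 * p₀₀ ^ 2))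

theorem isFixedPt_step_binary {f₀ a b c : ℝ} (hab : a + b = 1) (hc : c ≠ 0)
    (ha : (f₀ * a + (1 - f₀) * b) ^ 2 = c * a) (hb : (f₀ * b + (1 - f₀) * a) ^ 2 = c * b) :
    Function.IsFixedPt (step f₀) (a, 0, 0, b) := by
  have hN : (f₀ ^ 2 + (1 - f₀) ^ 2) * ((a + 0) ^ 2 + (0 + b) ^ 2)
      + 4 * f₀ * (1 - f₀) * (a + 0) * (0 + b) = c := by
    linear_combination ha + hb + c * hab
  simp only [Function.IsFixedPt, step, hN, Prod.mk.injEq]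
  refine ⟨?_, by ring, by ring, ?_⟩ <;> field_simp
  · linear_combination ha
  · linear_combination hb

noncomputable def fixedWeight (f₀ s : ℝ) : ℝ := 1 / 2 + s / (4 * f₀ - 2)

theorem fixedWeight_neg (f₀ s : ℝ) : fixedWeight f₀ (-s) = 1 / 2 - s / (4 * f₀ - 2) := by
  rw [fixedWeight, neg_div, ← sub_eq_add_neg]

theorem fixedWeight_add_fixedWeight_neg (f₀ s : ℝ) :
    fixedWeight f₀ s + fixedWeight f₀ (-s) = 1 := by
  rw [fixedWeight_neg, fixedWeight]; ring

theorem mix_fixedWeight {f₀ : ℝ} (s : ℝ) (hf : 4 * f₀ - 2 ≠ 0) :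
    f₀ * fixedWeight f₀ s + (1 - f₀) * fixedWeight f₀ (-s) = (1 + s) / 2 := by
  rw [fixedWeight_neg, fixedWeight]
  linear_combination (1 / 2 : ℝ) * div_mul_cancel₀ s hf

theorem sq_mix_fixedWeight {f₀ s : ℝ} (hf : 4 * f₀ - 2 ≠ 0) (hs : s ^ 2 = 4 * f₀ - 3) :
    (f₀ * fixedWeight f₀ s + (1 - f₀) * fixedWeight f₀ (-s)) ^ 2
      = (2 * f₀ - 1) * fixedWeight f₀ s := by
  rw [mix_fixedWeight s hf, fixedWeight]
  linear_combination (1 / 4 : ℝ) * hs - (1 / 2 : ℝ) * div_mul_cancel₀ s hf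

end DEJMPS

theorem dejmps_binary_fixed_point_general (f₀ : ℝ)
    (hdisc : 0 ≤ 4 * f₀ - 3) :
    let f₁ : ℝ := 1 - f₀
    let p₀₀ : ℝ := 1 / 2 + Real.sqrt (4 * f₀ - 3) / (4 * f₀ - 2)
    let p₀₁ : ℝ := 0
    let p₁₀ : ℝ := 0
    let p₁₁ : ℝ := 1 / 2 - Real.sqrt (4 * f₀ - 3) / (4 * f₀ - 2)
    let N : ℝ := (f₀ ^ 2 + f₁ ^ 2) * ((p₀₀ + p₀₁) ^ 2 + (p₁₀ + p₁₁) ^ 2)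
      + 4 * f₀ * f₁ * (p₀₀ + p₀₁) * (p₁₀ + p₁₁)
    (1 / N) * (f₀ ^ 2 * (p₀₀ ^ 2 + 2 * p₀₀ * p₀₁) + f₁ ^ 2 * (p₁₁ ^ 2 + 2 * p₁₀ * p₁₁)
        + 2 * f₀ * f₁ * (p₁₁ * p₀₀ + p₁₀ * p₀₀ + p₁₁ * p₀₁)) = p₀₀ ∧
    (1 / N) * (f₀ ^ 2 * p₀₁ ^ 2 + 2 * f₀ * f₁ * p₁₀ * p₀₁ + f₁ ^ 2 * p₁₀ ^ 2) = p₀₁ ∧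
    (1 / N) * (f₀ ^ 2 * (p₁₀ ^ 2 + 2 * p₁₀ * p₁₁) + f₁ ^ 2 * (p₀₁ ^ 2 + 2 * p₀₀ * p₀₁)
        + 2 * f₀ * f₁ * (p₀₁ * p₁₀ + p₀₀ * p₁₀ + p₀₁ * p₁₁)) = p₁₀ ∧
    (1 / N) * (f₀ ^ 2 * p₁₁ ^ 2 + 2 * f₀ * f₁ * p₀₀ * p₁₁ + f₁ ^ 2 * p₀₀ ^ 2) = p₁₁ := by
  intro f₁ p₀₀ p₀₁ p₁₀ p₁₁ N
  set s := Real.sqrt (4 * f₀ - 3)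
  have hs : s ^ 2 = 4 * f₀ - 3 := Real.sq_sqrt hdisc
  have hf : 4 * f₀ - 2 ≠ 0 := by linarith
  have hx := DEJMPS.sq_mix_fixedWeight hf hs
  have hy := DEJMPS.sq_mix_fixedWeight (s := -s) hf (by rwa [neg_sq])
  rw [neg_neg] at hy
  have hfix := DEJMPS.isFixedPt_step_binary
    (DEJMPS.fixedWeight_add_fixedWeight_neg f₀ s) (by linarith) hx hy
  rw [DEJMPS.fixedWeight_neg] at hfix
  exact ⟨congrArg (·.1) hfix, congrArg (·.2.1) hfix, congrArg (·.2.2.1) hfix,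
    congrArg (·.2.2.2) hfix⟩

/-- Recurrence relations of the noisy DEJMPS protocol for binary pairs. -/
theorem dejmps_binary_fixed_point (f₀ : ℝ) (hlo : 0.78 ≤ f₀) (hhi : f₀ ≤ 1)
    (hdisc : 0 ≤ 4 * f₀ - 3) (hne : f₀ ≠ 1 / 2) :
    let f₁ : ℝ := 1 - f₀
    let p₀₀ : ℝ := 1 / 2 + Real.sqrt (4 * f₀ - 3) / (4 * f₀ - 2)
    let p₀₁ : ℝ := 0
    let p₁₀ : ℝ := 0
    let p₁₁ : ℝ := 1 / 2 - Real.sqrt (4 * f₀ - 3) / (4 * f₀ - 2)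
    let N : ℝ := (f₀ ^ 2 + f₁ ^ 2) * ((p₀₀ + p₀₁) ^ 2 + (p₁₀ + p₁₁) ^ 2)
      + 4 * f₀ * f₁ * (p₀₀ + p₀₁) * (p₁₀ + p₁₁)
    (1 / N) * (f₀ ^ 2 * (p₀₀ ^ 2 + 2 * p₀₀ * p₀₁) + f₁ ^ 2 * (p₁₁ ^ 2 + 2 * p₁₀ * p₁₁)
        + 2 * f₀ * f₁ * (p₁₁ * p₀₀ + p₁₀ * p₀₀ + p₁₁ * p₀₁)) = p₀₀ ∧
    (1 / N) * (f₀ ^ 2 * p₀₁ ^ 2 + 2 * f₀ * f₁ * p₁₀ * p₀₁ + f₁ ^ 2 * p₁₀ ^ 2) = p₀₁ ∧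
    (1 / N) * (f₀ ^ 2 * (p₁₀ ^ 2 + 2 * p₁₀ * p₁₁) + f₁ ^ 2 * (p₀₁ ^ 2 + 2 * p₀₀ * p₀₁)
        + 2 * f₀ * f₁ * (p₀₁ * p₁₀ + p₀₀ * p₁₀ + p₀₁ * p₁₁)) = p₁₀ ∧
    (1 / N) * (f₀ ^ 2 * p₁₁ ^ 2 + 2 * f₀ * f₁ * p₀₀ * p₁₁ + f₁ ^ 2 * p₀₀ ^ 2) = p₁₁ :=
  dejmps_binary_fixed_point_general f₀ hdisc
end

section
/- Let ρ_AB be a density operator with purification |ψ⟩_{ABR}, and let φ_AB = |φ⟩⟨φ|_A ⊗ μ_B with tr_B ρ_AB satisfying ‖tr_B ρ_AB - |φ⟩⟨φ|_A‖₁ ≤ ε and tr_A ρ_AB = μ_B. Then ‖ρ_AB - |φ⟩⟨φ|_A ⊗ μ_B‖₁ ≤ 4√ε. -/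
/-!
Let `P = |φ⟩⟨φ| ⊗ 1 ⊗ 1`. Then `⟨ψ, P ψ⟩ = ⟨φ| ρ_A |φ⟩ ≥ 1 - ‖ρ_A - |φ⟩⟨φ|‖₁ ≥ 1 - ε`, so
the product vector `P ψ = φ ⊗ ξ` is within `√ε` of `ψ`. Rank-one operators `|u⟩⟨u|`, `|v⟩⟨v|`
of vectors of norm at most one are within `2 ‖u - v‖` in trace norm, and partial traces do not
increase the trace norm. Hence `ρ_AB` is `2√ε`-close to `|φ⟩⟨φ| ⊗ σ` with `σ = tr_R |ξ⟩⟨ξ|`,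
and, tracing out `A`, `μ_B` is `2√ε`-close to `σ`; the triangle inequality gives `4√ε`.

All trace-norm estimates come from the duality `‖X‖₁ = max {|tr (C X)| : ‖C‖ ≤ 1}` for the operator
norm, the maximum being attained at the adjoint of the partial isometry in the polar decomposition
of `X`.
-/

open scoped ComplexOrder
open Matrix

/-- The trace norm `‖A‖₁ = tr √(AᴴA)`. -/
noncomputable def traceNorm {n : Type*} [Fintype n] [DecidableEq n]
    (A : Matrix n n ℂ) : ℝ :=
  (((Matrix.posSemidef_conjTranspose_mul_self A).1.eigenvectorUnitary : Matrix n n ℂ) *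
    diagonal (((↑) : ℝ → ℂ) ∘ (√·) ∘ (Matrix.posSemidef_conjTranspose_mul_self A).1.eigenvalues) *
    (star ((Matrix.posSemidef_conjTranspose_mul_self A).1.eigenvectorUnitary : Matrix n n ℂ))).trace.re

/-- Kronecker product of operators on the two subsystems. -/
noncomputable def kron {a b : Type*} (A : Matrix a a ℂ) (B : Matrix b b ℂ) :
    Matrix (a × b) (a × b) ℂ :=
  Matrix.of fun x y => A x.1 y.1 * B x.2 y.2

/-- Partial trace over the second subsystem. -/
noncomputable def ptraceB {a b : Type*} [Fintype b]
    (ρ : Matrix (a × b) (a × b) ℂ) : Matrix a a ℂ :=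
  Matrix.of fun x y => ∑ s, ρ (x, s) (y, s)

/-- Partial trace over the first subsystem. -/
noncomputable def ptraceA {a b : Type*} [Fintype a]
    (ρ : Matrix (a × b) (a × b) ℂ) : Matrix b b ℂ :=
  Matrix.of fun x y => ∑ s, ρ (s, x) (s, y)

/-- Rank-one projector `|v⟩⟨v|`. -/
noncomputable def proj {n : Type*} (v : n → ℂ) : Matrix n n ℂ :=
  Matrix.of fun i j => v i * star (v j)

open scoped Matrix.Norms.L2Operator InnerProductSpace Kronecker
open WithLp

section Vectors

variable {n : Type*} [Fintype n]

lemma norm_toLp_eq_one_of_sum_sq {v : n → ℂ} (hv : ∑ i, ‖v i‖ ^ 2 = 1) : ‖toLp 2 v‖ = 1 := by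
  rw [← pow_eq_one_iff_of_nonneg (norm_nonneg _) two_ne_zero, EuclideanSpace.norm_sq_eq]
  exact hv

lemma star_dotProduct_self_of_norm_eq_one {φ : n → ℂ} (hφ : ‖toLp 2 φ‖ = 1) :
    star φ ⬝ᵥ φ = 1 := by
  rw [dotProduct_comm, ← EuclideanSpace.inner_toLp_toLp, inner_self_eq_norm_sq_to_K, hφ]
  simp

lemma inner_mulVec_left (M : Matrix n n ℂ) (v w : n → ℂ) :
    ⟪toLp 2 (M *ᵥ v), toLp 2 w⟫_ℂ = ⟪toLp 2 v, toLp 2 (Mᴴ *ᵥ w)⟫_ℂ := by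
  simp only [EuclideanSpace.inner_toLp_toLp, star_mulVec]
  rw [dotProduct_comm, ← dotProduct_mulVec, dotProduct_comm]

lemma trace_mul_proj (M : Matrix n n ℂ) (v : n → ℂ) :
    (M * proj v).trace = ⟪toLp 2 v, toLp 2 (M *ᵥ v)⟫_ℂ := by
  show (M * vecMulVec v (star v)).trace = _
  rw [mul_vecMulVec, trace_vecMulVec]
  rfl

lemma trace_proj {φ : n → ℂ} (hφ : ‖toLp 2 φ‖ = 1) : (proj φ).trace = 1 := by
  rw [← star_dotProduct_self_of_norm_eq_one hφ, dotProduct_comm]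
  exact trace_vecMulVec _ _

lemma proj_mulVec_self {φ : n → ℂ} (hφ : ‖toLp 2 φ‖ = 1) : proj φ *ᵥ φ = φ := by
  show vecMulVec φ (star φ) *ᵥ φ = φ
  rw [vecMulVec_mulVec, star_dotProduct_self_of_norm_eq_one hφ]
  simp

lemma isStarProjection_proj {φ : n → ℂ} (hφ : ‖toLp 2 φ‖ = 1) : IsStarProjection (proj φ) where
  isIdempotentElem := by
    show vecMulVec φ (star φ) * vecMulVec φ (star φ) = vecMulVec φ (star φ)
    rw [mul_vecMulVec]
    exact congrArg (vecMulVec · _) (proj_mulVec_self hφ)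
  isSelfAdjoint := by
    show star (vecMulVec φ (star φ)) = vecMulVec φ (star φ)
    rw [star_eq_conjTranspose, conjTranspose_vecMulVec, star_star]

lemma IsStarProjection.kron {m : Type*} [Fintype m] {A : Matrix n n ℂ} {B : Matrix m m ℂ}
    (hA : IsStarProjection A) (hB : IsStarProjection B) : IsStarProjection (kron A B) where
  isIdempotentElem := by
    show A ⊗ₖ B * A ⊗ₖ B = A ⊗ₖ B
    rw [← mul_kronecker_mul, hA.isIdempotentElem.eq, hB.isIdempotentElem.eq]
  isSelfAdjoint := by
    show star (A ⊗ₖ B) = A ⊗ₖ B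
    rw [star_eq_conjTranspose, conjTranspose_kronecker, ← star_eq_conjTranspose,
      ← star_eq_conjTranspose, hA.isSelfAdjoint.star_eq, hB.isSelfAdjoint.star_eq]

lemma IsStarProjection.norm_sq_mulVec {P : Matrix n n ℂ} (hP : IsStarProjection P) (v : n → ℂ) :
    ‖toLp 2 (P *ᵥ v)‖ ^ 2 = RCLike.re ⟪toLp 2 v, toLp 2 (P *ᵥ v)⟫_ℂ := by
  rw [← inner_self_eq_norm_sq (𝕜 := ℂ), inner_mulVec_left, ← star_eq_conjTranspose,
    hP.isSelfAdjoint.star_eq, mulVec_mulVec, hP.isIdempotentElem.eq]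

lemma IsStarProjection.norm_sub_mulVec_sq {P : Matrix n n ℂ} (hP : IsStarProjection P)
    (v : n → ℂ) :
    ‖toLp 2 (v - P *ᵥ v)‖ ^ 2 = ‖toLp 2 v‖ ^ 2 - RCLike.re ⟪toLp 2 v, toLp 2 (P *ᵥ v)⟫_ℂ := by
  rw [WithLp.toLp_sub, @norm_sub_sq ℂ, hP.norm_sq_mulVec]
  ring

end Vectors

section TraceNorm

variable {n : Type*} [Fintype n] [DecidableEq n]

lemma l2_opNorm_le_of_norm_mulVec_le {m : Type*} [Fintype m] {M : Matrix m n ℂ} {c : ℝ} (hc : 0 ≤ c)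
    (h : ∀ v, ‖toLp 2 (M *ᵥ v)‖ ≤ c * ‖toLp 2 v‖) : ‖M‖ ≤ c := by
  rw [l2_opNorm_def]
  exact ContinuousLinearMap.opNorm_le_bound _ hc fun v => h v

lemma norm_toLp_mulVec_le {m : Type*} [Fintype m] (M : Matrix m n ℂ) (v : n → ℂ) :
    ‖toLp 2 (M *ᵥ v)‖ ≤ ‖M‖ * ‖toLp 2 v‖ :=
  l2_opNorm_mulVec M (toLp 2 v)

lemma trace_eq_sum_inner_toEuclideanCLM (M : Matrix n n ℂ)
    (b : OrthonormalBasis n ℂ (EuclideanSpace ℂ n)) :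
    M.trace = ∑ i, ⟪b i, toEuclideanCLM (n := n) (𝕜 := ℂ) M (b i)⟫_ℂ := by
  have h := LinearMap.trace_eq_sum_inner (toEuclideanCLM (n := n) (𝕜 := ℂ) M : _ →ₗ[ℂ] _) b
  rw [ContinuousLinearMap.coe_coe] at h
  rw [← h, coe_toEuclideanCLM_eq_toEuclideanLin,
    LinearMap.trace_eq_matrix_trace ℂ (EuclideanSpace.basisFun n ℂ).toBasis,
    toEuclideanLin_eq_toLin_orthonormal, LinearMap.toMatrix_toLin]

lemma traceNorm_eq_sum_sqrt_eigenvalues (A : Matrix n n ℂ) :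
    traceNorm A = ∑ i, √((posSemidef_conjTranspose_mul_self A).1.eigenvalues i) := by
  rw [traceNorm, trace_mul_cycle, Unitary.coe_star_mul_self, one_mul, trace_diagonal]
  simp

lemma traceNorm_nonneg (A : Matrix n n ℂ) : 0 ≤ traceNorm A := by
  rw [traceNorm_eq_sum_sqrt_eigenvalues]
  positivity

lemma norm_toEuclideanCLM_eigenvectorBasis (A : Matrix n n ℂ) (i : n) :
    ‖toEuclideanCLM (n := n) (𝕜 := ℂ) A
        ((posSemidef_conjTranspose_mul_self A).1.eigenvectorBasis i)‖
      = √((posSemidef_conjTranspose_mul_self A).1.eigenvalues i) := by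
  set hH := (posSemidef_conjTranspose_mul_self A).1
  set T := toEuclideanCLM (n := n) (𝕜 := ℂ)
  set v := hH.eigenvectorBasis i
  have hTv : T (Aᴴ * A) v = (hH.eigenvalues i : ℂ) • v := by
    ext1
    simp [T, v, ofLp_toEuclideanCLM, hH.mulVec_eigenvectorBasis]
  have hsq : ‖T A v‖ ^ 2 = hH.eigenvalues i := by
    rw [← inner_self_eq_norm_sq (𝕜 := ℂ), ← ContinuousLinearMap.adjoint_inner_right,
      ← ContinuousLinearMap.star_eq_adjoint, ← map_star, ← mul_apply_eq_comp, ← map_mul,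
      star_eq_conjTranspose, hTv, inner_smul_right, inner_self_eq_norm_sq_to_K,
      hH.eigenvectorBasis.orthonormal.1 i]
    simp
  rw [← hsq, Real.sqrt_sq (norm_nonneg _)]

lemma norm_trace_mul_le (C A : Matrix n n ℂ) : ‖(C * A).trace‖ ≤ ‖C‖ * traceNorm A := by
  set hH := (posSemidef_conjTranspose_mul_self A).1
  set T := toEuclideanCLM (n := n) (𝕜 := ℂ)
  rw [trace_eq_sum_inner_toEuclideanCLM _ hH.eigenvectorBasis, traceNorm_eq_sum_sqrt_eigenvalues,
    Finset.mul_sum]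
  refine (norm_sum_le _ _).trans (Finset.sum_le_sum fun i _ => ?_)
  rw [map_mul, mul_apply_eq_comp, ← ContinuousLinearMap.adjoint_inner_left,
    ← norm_toEuclideanCLM_eigenvectorBasis]
  calc _ ≤ ‖(T C).adjoint (hH.eigenvectorBasis i)‖ * ‖T A (hH.eigenvectorBasis i)‖ :=
        norm_inner_le_norm _ _
    _ ≤ ‖C‖ * ‖T A (hH.eigenvectorBasis i)‖ := by
        gcongr
        refine ((T C).adjoint.le_opNorm _).trans ?_
        rw [hH.eigenvectorBasis.orthonormal.1 i, mul_one, ContinuousLinearMap.adjoint.norm_map]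
        rfl

lemma norm_trace_mul_le_traceNorm {C : Matrix n n ℂ} (hC : ‖C‖ ≤ 1) (A : Matrix n n ℂ) :
    ‖(C * A).trace‖ ≤ traceNorm A :=
  (norm_trace_mul_le C A).trans (mul_le_of_le_one_left (traceNorm_nonneg A) hC)

open Unitary in
lemma trace_conjStarAlgAut (u : unitaryGroup n ℂ) (X : Matrix n n ℂ) :
    (conjStarAlgAut ℂ _ u X).trace = X.trace := by
  rw [conjStarAlgAut_apply, trace_mul_cycle, coe_star_mul_self, one_mul]

open Unitary in
lemma l2_opNorm_conjStarAlgAut (u : unitaryGroup n ℂ) (X : Matrix n n ℂ) :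
    ‖conjStarAlgAut ℂ _ u X‖ = ‖X‖ := by
  rw [conjStarAlgAut_apply, ← coe_star, CStarRing.norm_mul_coe_unitary,
    CStarRing.norm_coe_unitary_mul]

open Unitary in
lemma exists_trace_mul_eq_traceNorm (A : Matrix n n ℂ) :
    ∃ C : Matrix n n ℂ, ‖C‖ ≤ 1 ∧ (C * A).trace = traceNorm A := by
  set hH := (posSemidef_conjTranspose_mul_self A).1
  set ev := hH.eigenvalues
  set Φ := conjStarAlgAut ℂ _ hH.eigenvectorUnitary
  have hspec : Aᴴ * A = Φ (diagonal fun i => (ev i : ℂ)) := hH.spectral_theorem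
  -- `G = (Aᴴ A)^(-1/2)` on the support of `A` and `0` on its kernel (as `(√0)⁻¹ = 0`), so
  -- `G * Aᴴ` is the adjoint of the partial isometry in the polar decomposition of `A`.
  set G : Matrix n n ℂ := Φ (diagonal fun i => (((√(ev i))⁻¹ : ℝ) : ℂ))
  refine ⟨G * Aᴴ, ?_, ?_⟩
  · have hGH : Gᴴ = G := by
      rw [← star_eq_conjTranspose, ← map_star, star_eq_conjTranspose, diagonal_conjTranspose]
      congr 2
      ext i
      simp
    have hCC : (G * Aᴴ) * (G * Aᴴ)ᴴ
        = Φ (diagonal fun i => (((√(ev i))⁻¹ * ev i * (√(ev i))⁻¹ : ℝ) : ℂ)) := by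
      rw [conjTranspose_mul, conjTranspose_conjTranspose, hGH, mul_assoc, ← mul_assoc Aᴴ, hspec,
        ← map_mul, ← map_mul, diagonal_mul_diagonal, diagonal_mul_diagonal]
      push_cast
      simp only [mul_assoc]
    have hle : ‖G * Aᴴ‖ * ‖G * Aᴴ‖ ≤ 1 := by
      rw [← l2_opNorm_conjTranspose (G * Aᴴ), ← l2_opNorm_conjTranspose_mul_self,
        conjTranspose_conjTranspose, hCC, l2_opNorm_conjStarAlgAut, l2_opNorm_diagonal]
      refine (pi_norm_le_iff_of_nonneg zero_le_one).2 fun i => ?_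
      rw [Complex.norm_real, Real.norm_eq_abs, inv_mul_eq_div, Real.div_sqrt,
        abs_of_nonneg (by positivity)]
      exact mul_inv_le_one
    nlinarith [norm_nonneg (G * Aᴴ)]
  · rw [mul_assoc, hspec, ← map_mul, trace_conjStarAlgAut, diagonal_mul_diagonal, trace_diagonal,
      traceNorm_eq_sum_sqrt_eigenvalues, Complex.ofReal_sum]
    refine Finset.sum_congr rfl fun i _ => ?_
    rw [← Complex.ofReal_mul, inv_mul_eq_div, Real.div_sqrt]

lemma traceNorm_le_of_forall_norm_trace_mul_le {A : Matrix n n ℂ} {c : ℝ}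
    (h : ∀ C : Matrix n n ℂ, ‖C‖ ≤ 1 → ‖(C * A).trace‖ ≤ c) : traceNorm A ≤ c := by
  obtain ⟨C, hC, hCA⟩ := exists_trace_mul_eq_traceNorm A
  have := h C hC
  rw [hCA, Complex.norm_real, Real.norm_eq_abs] at this
  exact (le_abs_self _).trans this

lemma traceNorm_add_le (A B : Matrix n n ℂ) : traceNorm (A + B) ≤ traceNorm A + traceNorm B := by
  refine traceNorm_le_of_forall_norm_trace_mul_le fun C hC => ?_
  rw [mul_add, trace_add]
  exact (norm_add_le _ _).trans
    (add_le_add (norm_trace_mul_le_traceNorm hC A) (norm_trace_mul_le_traceNorm hC B))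

lemma traceNorm_sub_le (A B : Matrix n n ℂ) : traceNorm (A - B) ≤ traceNorm A + traceNorm B := by
  refine traceNorm_le_of_forall_norm_trace_mul_le fun C hC => ?_
  rw [mul_sub, trace_sub]
  exact (norm_sub_le _ _).trans
    (add_le_add (norm_trace_mul_le_traceNorm hC A) (norm_trace_mul_le_traceNorm hC B))

lemma traceNorm_vecMulVec_le (u v : n → ℂ) :
    traceNorm (vecMulVec u (star v)) ≤ ‖toLp 2 u‖ * ‖toLp 2 v‖ := by
  refine traceNorm_le_of_forall_norm_trace_mul_le fun C hC => ?_
  rw [mul_vecMulVec, trace_vecMulVec, ← EuclideanSpace.inner_toLp_toLp]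
  calc _ ≤ ‖toLp 2 v‖ * ‖toLp 2 (C *ᵥ u)‖ := norm_inner_le_norm _ _
    _ ≤ ‖toLp 2 v‖ * ‖toLp 2 u‖ := by
        gcongr
        exact (norm_toLp_mulVec_le C u).trans (mul_le_of_le_one_left (norm_nonneg _) hC)
    _ = _ := mul_comm _ _

lemma traceNorm_proj_sub_proj_le (u v : n → ℂ) :
    traceNorm (proj u - proj v) ≤ (‖toLp 2 u‖ + ‖toLp 2 v‖) * ‖toLp 2 (u - v)‖ := by
  have hsplit : proj u - proj v = vecMulVec u (star (u - v)) + vecMulVec (u - v) (star v) := by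
    ext i j
    simp only [proj, vecMulVec_apply, of_apply, Matrix.sub_apply, Matrix.add_apply, Pi.sub_apply,
      Pi.star_apply, star_sub]
    ring
  rw [hsplit, add_mul]
  refine (traceNorm_add_le _ _).trans (add_le_add (traceNorm_vecMulVec_le u (u - v)) ?_)
  rw [mul_comm]
  exact traceNorm_vecMulVec_le (u - v) v

lemma traceNorm_mul_mul_conjTranspose_le {m : Type*} [Fintype m] [DecidableEq m]
    (E : Matrix m n ℂ) (M : Matrix n n ℂ) : traceNorm (E * M * Eᴴ) ≤ ‖E‖ ^ 2 * traceNorm M := by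
  refine traceNorm_le_of_forall_norm_trace_mul_le fun C hC => ?_
  have hnorm : ‖Eᴴ * C * E‖ ≤ ‖E‖ ^ 2 := by
    calc ‖Eᴴ * C * E‖ ≤ ‖Eᴴ‖ * ‖C‖ * ‖E‖ :=
          (l2_opNorm_mul _ _).trans (by gcongr; exact l2_opNorm_mul _ _)
      _ ≤ ‖E‖ * 1 * ‖E‖ := by rw [l2_opNorm_conjTranspose]; gcongr
      _ = ‖E‖ ^ 2 := by ring
  have htr : (C * (E * M * Eᴴ)).trace = (Eᴴ * C * E * M).trace := by
    rw [← Matrix.mul_assoc, ← Matrix.mul_assoc, trace_mul_comm]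
    simp only [Matrix.mul_assoc]
  rw [htr]
  exact (norm_trace_mul_le _ _).trans (by gcongr; exact traceNorm_nonneg M)

lemma one_sub_traceNorm_sub_proj_le {φ : n → ℂ} (hφ : ‖toLp 2 φ‖ = 1) (M : Matrix n n ℂ) :
    1 - traceNorm (M - proj φ) ≤ ((proj φ * M).trace).re := by
  have hP := isStarProjection_proj hφ
  have hsplit : (proj φ * M).trace = (proj φ * (M - proj φ)).trace + 1 := by
    rw [mul_sub, trace_sub, hP.isIdempotentElem.eq, trace_proj hφ, sub_add_cancel]
  have := norm_trace_mul_le_traceNorm hP.norm_le (M - proj φ)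
  rw [hsplit, Complex.add_re, Complex.one_re]
  linarith [neg_le_of_abs_le (Complex.abs_re_le_norm (proj φ * (M - proj φ)).trace)]

end TraceNorm

section PartialTrace

variable {a b r : Type*}

lemma ptraceA_sub [Fintype a] (X Y : Matrix (a × b) (a × b) ℂ) :
    ptraceA (X - Y) = ptraceA X - ptraceA Y := by
  ext s t
  simp [ptraceA, Finset.sum_sub_distrib]

lemma ptraceB_sub [Fintype b] (X Y : Matrix (a × b) (a × b) ℂ) :
    ptraceB (X - Y) = ptraceB X - ptraceB Y := by
  ext s t
  simp [ptraceB, Finset.sum_sub_distrib]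

lemma kron_sub (A : Matrix a a ℂ) (B C : Matrix b b ℂ) :
    kron A (B - C) = kron A B - kron A C := by
  ext p q
  simp [kron, mul_sub]

lemma trace_mul_ptraceA [Fintype a] [DecidableEq a] [Fintype b] (C : Matrix b b ℂ)
    (X : Matrix (a × b) (a × b) ℂ) :
    (C * ptraceA X).trace = (kron (1 : Matrix a a ℂ) C * X).trace := by
  simp only [trace, ptraceA, diag_apply, mul_apply, of_apply, Finset.mul_sum, kron, one_apply,
    ite_mul, one_mul, zero_mul, Fintype.sum_prod_type, Finset.sum_ite_irrel, Finset.sum_const_zero,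
    Finset.sum_ite_eq, Finset.mem_univ, ↓reduceIte]
  rw [eq_comm, Finset.sum_comm]
  exact Finset.sum_congr rfl fun _ _ => Finset.sum_comm

lemma trace_mul_ptraceB [Fintype a] [Fintype b] [DecidableEq b] (C : Matrix a a ℂ)
    (X : Matrix (a × b) (a × b) ℂ) :
    (C * ptraceB X).trace = (kron C (1 : Matrix b b ℂ) * X).trace := by
  simp only [trace, ptraceB, diag_apply, mul_apply, of_apply, Finset.mul_sum, kron, one_apply,
    mul_ite, mul_one, mul_zero, ite_mul, zero_mul, Fintype.sum_prod_type, Finset.sum_ite_eq,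
    Finset.mem_univ, ↓reduceIte]
  exact Finset.sum_congr rfl fun _ _ => Finset.sum_comm

lemma norm_sq_toLp_prod_left [Fintype a] [Fintype b] (v : a × b → ℂ) :
    ‖toLp 2 v‖ ^ 2 = ∑ x, ‖toLp 2 fun s => v (x, s)‖ ^ 2 := by
  simp only [EuclideanSpace.norm_sq_eq, Fintype.sum_prod_type]

lemma norm_sq_toLp_prod_right [Fintype a] [Fintype b] (v : a × b → ℂ) :
    ‖toLp 2 v‖ ^ 2 = ∑ s, ‖toLp 2 fun x => v (x, s)‖ ^ 2 := by
  simp only [EuclideanSpace.norm_sq_eq, Fintype.sum_prod_type_right]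

lemma l2_opNorm_one_kron_le [Fintype a] [DecidableEq a] [Fintype b] [DecidableEq b]
    (C : Matrix b b ℂ) : ‖kron (1 : Matrix a a ℂ) C‖ ≤ ‖C‖ := by
  refine l2_opNorm_le_of_norm_mulVec_le (norm_nonneg C) fun v => ?_
  have hslice (x : a) :
      (fun t => (kron (1 : Matrix a a ℂ) C *ᵥ v) (x, t)) = C *ᵥ fun s => v (x, s) := by
    ext t
    simp [kron, mulVec, dotProduct, one_apply, Fintype.sum_prod_type, ite_mul]
  rw [← sq_le_sq₀ (norm_nonneg _) (by positivity), mul_pow, norm_sq_toLp_prod_left,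
    norm_sq_toLp_prod_left, Finset.mul_sum]
  refine Finset.sum_le_sum fun x _ => ?_
  rw [hslice, ← mul_pow]
  exact pow_le_pow_left₀ (norm_nonneg _) (norm_toLp_mulVec_le _ _) 2

lemma l2_opNorm_kron_one_le [Fintype a] [DecidableEq a] [Fintype b] [DecidableEq b]
    (C : Matrix a a ℂ) : ‖kron C (1 : Matrix b b ℂ)‖ ≤ ‖C‖ := by
  refine l2_opNorm_le_of_norm_mulVec_le (norm_nonneg C) fun v => ?_
  have hslice (s : b) :
      (fun y => (kron C (1 : Matrix b b ℂ) *ᵥ v) (y, s)) = C *ᵥ fun x => v (x, s) := by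
    ext y
    simp [kron, mulVec, dotProduct, one_apply, Fintype.sum_prod_type]
  rw [← sq_le_sq₀ (norm_nonneg _) (by positivity), mul_pow, norm_sq_toLp_prod_right,
    norm_sq_toLp_prod_right, Finset.mul_sum]
  refine Finset.sum_le_sum fun s _ => ?_
  rw [hslice, ← mul_pow]
  exact pow_le_pow_left₀ (norm_nonneg _) (norm_toLp_mulVec_le _ _) 2

lemma traceNorm_ptraceA_le [Fintype a] [DecidableEq a] [Fintype b] [DecidableEq b]
    (X : Matrix (a × b) (a × b) ℂ) : traceNorm (ptraceA X) ≤ traceNorm X :=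
  traceNorm_le_of_forall_norm_trace_mul_le fun C hC => by
    rw [trace_mul_ptraceA]
    exact norm_trace_mul_le_traceNorm ((l2_opNorm_one_kron_le C).trans hC) X

lemma traceNorm_ptraceB_le [Fintype a] [DecidableEq a] [Fintype b] [DecidableEq b]
    (X : Matrix (a × b) (a × b) ℂ) : traceNorm (ptraceB X) ≤ traceNorm X :=
  traceNorm_le_of_forall_norm_trace_mul_le fun C hC => by
    rw [trace_mul_ptraceB]
    exact norm_trace_mul_le_traceNorm ((l2_opNorm_kron_one_le C).trans hC) X

lemma ptraceA_kron_proj [Fintype a] {φ : a → ℂ} (hφ : ‖toLp 2 φ‖ = 1) (M : Matrix b b ℂ) :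
    ptraceA (kron (proj φ) M) = M := by
  ext s t
  have h := star_dotProduct_self_of_norm_eq_one hφ
  simp only [dotProduct, Pi.star_apply] at h
  simp only [ptraceA, kron, proj, of_apply, ← Finset.sum_mul]
  simp_rw [mul_comm (φ _), h, one_mul]

def vecKronOne [DecidableEq b] (φ : a → ℂ) : Matrix (a × b) b ℂ :=
  of fun p s => if p.2 = s then φ p.1 else 0

lemma vecKronOne_mulVec [Fintype b] [DecidableEq b] (φ : a → ℂ) (v : b → ℂ) :
    vecKronOne φ *ᵥ v = fun p => φ p.1 * v p.2 := by
  ext p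
  simp [vecKronOne, mulVec, dotProduct]

lemma l2_opNorm_vecKronOne_le [Fintype a] [Fintype b] [DecidableEq b] (φ : a → ℂ) :
    ‖(vecKronOne φ : Matrix (a × b) b ℂ)‖ ≤ ‖toLp 2 φ‖ := by
  refine l2_opNorm_le_of_norm_mulVec_le (norm_nonneg _) fun v => le_of_eq ?_
  rw [vecKronOne_mulVec, ← sq_eq_sq₀ (norm_nonneg _) (by positivity), norm_sq_toLp_prod_left,
    mul_pow, EuclideanSpace.norm_sq_eq, Finset.sum_mul]
  refine Finset.sum_congr rfl fun x _ => ?_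
  rw [show (toLp 2 fun s => φ x * v s) = φ x • toLp 2 v from rfl, norm_smul, mul_pow]

lemma kron_proj_eq_vecKronOne_mul [Fintype b] [DecidableEq b] (φ : a → ℂ) (M : Matrix b b ℂ) :
    kron (proj φ) M
      = (vecKronOne φ : Matrix (a × b) b ℂ) * M * (vecKronOne φ : Matrix (a × b) b ℂ)ᴴ := by
  ext p q
  simp only [kron, proj, RCLike.star_def, of_apply, vecKronOne, mul_apply, ite_mul, zero_mul,
    Finset.sum_ite_eq, Finset.mem_univ, ↓reduceIte, conjTranspose_apply, apply_ite (starRingEnd ℂ),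
    map_zero, mul_ite, mul_zero]
  ring

lemma traceNorm_kron_proj_le [Fintype a] [DecidableEq a] [Fintype b] [DecidableEq b]
    (φ : a → ℂ) (M : Matrix b b ℂ) :
    traceNorm (kron (proj φ) M) ≤ ‖toLp 2 φ‖ ^ 2 * traceNorm M := by
  rw [kron_proj_eq_vecKronOne_mul]
  refine (traceNorm_mul_mul_conjTranspose_le _ M).trans ?_
  gcongr
  · exact traceNorm_nonneg M
  · exact l2_opNorm_vecKronOne_le φ

def tensorVec (φ : a → ℂ) (ξ : b × r → ℂ) : (a × b) × r → ℂ :=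
  fun p => φ p.1.1 * ξ (p.1.2, p.2)

lemma ptraceB_proj_tensorVec [Fintype r] (φ : a → ℂ) (ξ : b × r → ℂ) :
    ptraceB (proj (tensorVec φ ξ)) = kron (proj φ) (ptraceB (proj ξ)) := by
  ext p q
  simp only [ptraceB, proj, tensorVec, star_mul', RCLike.star_def, of_apply, kron, Finset.mul_sum]
  exact Finset.sum_congr rfl fun _ _ => by ring

lemma kron_proj_one_one_mulVec [Fintype a] [Fintype b] [DecidableEq b] [Fintype r]
    [DecidableEq r] (φ : a → ℂ) (ψ : (a × b) × r → ℂ) :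
    kron (kron (proj φ) (1 : Matrix b b ℂ)) (1 : Matrix r r ℂ) *ᵥ ψ
      = tensorVec φ (fun q => ∑ x, star (φ x) * ψ ((x, q.1), q.2)) := by
  ext p
  simp only [mulVec, dotProduct, kron, proj, RCLike.star_def, of_apply, one_apply, mul_ite, mul_one,
    mul_zero, ite_mul, zero_mul, Fintype.sum_prod_type, Finset.sum_ite_eq, Finset.mem_univ,
    ↓reduceIte, tensorVec, Finset.mul_sum]
  exact Finset.sum_congr rfl fun _ _ => by ring

lemma exists_tensorVec_norm_sub_le_sqrt [Fintype a] [DecidableEq a] [Fintype b] [DecidableEq b]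
    [Fintype r] [DecidableEq r] {φ : a → ℂ} (hφ : ‖toLp 2 φ‖ = 1) {ψ : (a × b) × r → ℂ}
    (hψ : ‖toLp 2 ψ‖ = 1) {ε : ℝ} (hA : traceNorm (ptraceB (ptraceB (proj ψ)) - proj φ) ≤ ε) :
    ∃ ξ : b × r → ℂ, ‖toLp 2 (tensorVec φ ξ)‖ ≤ 1 ∧ ‖toLp 2 (ψ - tensorVec φ ξ)‖ ≤ √ε := by
  set P := kron (kron (proj φ) (1 : Matrix b b ℂ)) (1 : Matrix r r ℂ)
  have hP : IsStarProjection P := ((isStarProjection_proj hφ).kron (.one _)).kron (.one _)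
  refine ⟨fun q => ∑ x, star (φ x) * ψ ((x, q.1), q.2), ?_, ?_⟩ <;>
    rw [← kron_proj_one_one_mulVec]
  · calc ‖toLp 2 (P *ᵥ ψ)‖ ≤ ‖P‖ * ‖toLp 2 ψ‖ := norm_toLp_mulVec_le _ _
      _ ≤ 1 := by rw [hψ, mul_one]; exact hP.norm_le
  · have hfid : ⟪toLp 2 ψ, toLp 2 (P *ᵥ ψ)⟫_ℂ = (proj φ * ptraceB (ptraceB (proj ψ))).trace := by
      rw [← trace_mul_proj, trace_mul_ptraceB, trace_mul_ptraceB]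
    have := one_sub_traceNorm_sub_proj_le hφ (ptraceB (ptraceB (proj ψ)))
    refine (le_abs_self _).trans (Real.abs_le_sqrt ?_)
    rw [hP.norm_sub_mulVec_sq, hfid, hψ]
    simp only [RCLike.re_to_complex]
    linarith

end PartialTrace

theorem local_states_product_bound_general
    {a b r : Type*} [Fintype a] [DecidableEq a] [Fintype b] [DecidableEq b]
    [Fintype r] [DecidableEq r]
    (ρAB : Matrix (a × b) (a × b) ℂ)
    (ψ : (a × b) × r → ℂ) (hψ : ∑ x, ‖ψ x‖ ^ 2 = 1)
    (hpurif : ρAB = ptraceB (proj ψ))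
    (φ : a → ℂ) (hφ : ∑ i, ‖φ i‖ ^ 2 = 1)
    (μB : Matrix b b ℂ)
    (ε : ℝ)
    (hA : traceNorm (ptraceB ρAB - proj φ) ≤ ε)
    (hB : ptraceA ρAB = μB) :
    traceNorm (ρAB - kron (proj φ) μB) ≤ 4 * Real.sqrt ε := by
  subst hpurif hB
  have hφ' := norm_toLp_eq_one_of_sum_sq hφ
  have hψ' := norm_toLp_eq_one_of_sum_sq hψ
  obtain ⟨ξ, hχ, hdist⟩ := exists_tensorVec_norm_sub_le_sqrt hφ' hψ' hA
  set ρ := ptraceB (proj ψ)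
  set σ := ptraceB (proj ξ)
  have hnear : traceNorm (ρ - kron (proj φ) σ) ≤ 2 * √ε := by
    rw [← ptraceB_proj_tensorVec, ← ptraceB_sub]
    refine (traceNorm_ptraceB_le _).trans ((traceNorm_proj_sub_proj_le _ _).trans ?_)
    rw [hψ']
    gcongr
    linarith
  have hμσ : ptraceA ρ - σ = ptraceA (ρ - kron (proj φ) σ) := by
    rw [ptraceA_sub, ptraceA_kron_proj hφ']
  calc traceNorm (ρ - kron (proj φ) (ptraceA ρ))
      = traceNorm ((ρ - kron (proj φ) σ) - kron (proj φ) (ptraceA ρ - σ)) := by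
        rw [kron_sub, sub_sub_sub_cancel_right]
    _ ≤ traceNorm (ρ - kron (proj φ) σ) + traceNorm (kron (proj φ) (ptraceA ρ - σ)) :=
        traceNorm_sub_le _ _
    _ ≤ traceNorm (ρ - kron (proj φ) σ) + traceNorm (ρ - kron (proj φ) σ) := by
        grw [traceNorm_kron_proj_le, hφ', hμσ, traceNorm_ptraceA_le]
        simp
    _ ≤ 4 * √ε := by linarith

theorem local_states_product_bound
    {a b r : Type*} [Fintype a] [DecidableEq a] [Fintype b] [DecidableEq b]
    [Fintype r] [DecidableEq r]
    (ρAB : Matrix (a × b) (a × b) ℂ)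
    (hρ : ρAB.PosSemidef) (hρtr : ρAB.trace = 1)
    (ψ : (a × b) × r → ℂ) (hψ : ∑ x, ‖ψ x‖ ^ 2 = 1)
    (hpurif : ρAB = ptraceB (proj ψ))
    (φ : a → ℂ) (hφ : ∑ i, ‖φ i‖ ^ 2 = 1)
    (μB : Matrix b b ℂ) (hμ : μB.PosSemidef) (hμtr : μB.trace = 1)
    (ε : ℝ) (hε : 0 ≤ ε)
    (hA : traceNorm (ptraceB ρAB - proj φ) ≤ ε)
    (hB : ptraceA ρAB = μB) :
    traceNorm (ρAB - kron (proj φ) μB) ≤ 4 * Real.sqrt ε :=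
  local_states_product_bound_general ρAB ψ hψ hpurif φ hφ μB ε hA hB
end

section
/- Define F' (F, f̃) = (f̃²(F² + ((1-F)/3)²) + (1-f̃²)/8) / (f̃²(F² + 2F(1-F)/3 + 5((1-F)/3)²) + (1-f̃²)/2). Then for f̃ with 10 - 9/f̃² ≥ 0, the values F_{min,max} = (3 ± √(10 - 9/f̃²))/4 are fixed points, i.e. F'(F_{max}, f̃) = F_{max} and F'(F_{min}, f̃) = F_{min}. -/
/-!
Clearing the denominator, the fixed points of `F ↦ F'(F)` are the roots of the cubic
`(4F - 1) (f̃² (4F - 3)² - (10 f̃² - 9))`. The quadratic factor vanishes at `F_{min,max}`, and there the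
denominator simplifies to `f̃² (8F + 1) / 9`, which is nonzero because `√(10 - 9/f̃²) ≤ √10 < 7/2`.
-/

open Function

noncomputable section

namespace BBPSSW

-- `g` stands for the squared noise parameter `f̃²`.

def numer (g F : ℝ) : ℝ :=
  g * (F ^ 2 + ((1 - F) / 3) ^ 2) + (1 - g) / 8

def denom (g F : ℝ) : ℝ :=
  g * (F ^ 2 + 2 * F * (1 - F) / 3 + 5 * ((1 - F) / 3) ^ 2) + (1 - g) / 2

def fidelity (g F : ℝ) : ℝ :=
  numer g F / denom g F

theorem mul_denom_sub_numer (g F : ℝ) :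
    F * denom g F - numer g F = (4 * F - 1) * (g * (4 * F - 3) ^ 2 - (10 * g - 9)) / 72 := by
  unfold denom numer
  ring

theorem denom_eq_of_sq_eq {g F : ℝ} (h : g * (4 * F - 3) ^ 2 = 10 * g - 9) :
    denom g F = g * (8 * F + 1) / 9 := by
  unfold denom
  linear_combination h / 18

theorem isFixedPt_fidelity {g F : ℝ} (h : g * (4 * F - 3) ^ 2 = 10 * g - 9)
    (hF : 8 * F + 1 ≠ 0) : IsFixedPt (fidelity g) F := by
  have hg : g ≠ 0 := by
    rintro rfl
    norm_num at h
  have hdenom : denom g F ≠ 0 := by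
    rw [denom_eq_of_sq_eq h]
    positivity
  rw [IsFixedPt, fidelity, div_eq_iff hdenom, eq_comm, ← sub_eq_zero, mul_denom_sub_numer, h,
    sub_self, mul_zero, zero_div]

end BBPSSW

end

theorem bbpssw_correlated_noise_fixed_points (ftil : ℝ) (hf : ftil ≠ 0)
    (hdisc : 0 ≤ 10 - 9 / ftil ^ 2) :
    let F' : ℝ → ℝ := fun F =>
      (ftil ^ 2 * (F ^ 2 + ((1 - F) / 3) ^ 2) + (1 - ftil ^ 2) / 8) /
        (ftil ^ 2 * (F ^ 2 + 2 * F * (1 - F) / 3 + 5 * ((1 - F) / 3) ^ 2)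
          + (1 - ftil ^ 2) / 2)
    let Fmax : ℝ := (3 + Real.sqrt (10 - 9 / ftil ^ 2)) / 4
    let Fmin : ℝ := (3 - Real.sqrt (10 - 9 / ftil ^ 2)) / 4
    F' Fmax = Fmax ∧ F' Fmin = Fmin := by
  intro F' Fmax Fmin
  set s := Real.sqrt (10 - 9 / ftil ^ 2)
  have hs_sq : s ^ 2 = 10 - 9 / ftil ^ 2 := Real.sq_sqrt hdisc
  have hroot : ftil ^ 2 * s ^ 2 = 10 * ftil ^ 2 - 9 := by
    rw [hs_sq]
    field_simp
  have hs_nonneg : 0 ≤ s := Real.sqrt_nonneg _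
  have hs_lt : s < 7 / 2 := by
    have h9 : 0 ≤ 9 / ftil ^ 2 := by positivity
    nlinarith
  constructor
  · exact BBPSSW.isFixedPt_fidelity (F := (3 + s) / 4) (by rw [← hroot]; ring) (by linarith)
  · exact BBPSSW.isFixedPt_fidelity (F := (3 - s) / 4) (by rw [← hroot]; ring) (by linarith)
end
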